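/- Soundness of backward trace slicing for one step in an elementary rewrite theory: let T : t0 → t1 be a one-step execution trace via rule r1 in an elementary rewrite theory R, O a slicing criterion (a set of positions of t1), and T• : t0• → t1• the corresponding trace slice (t1• = slice(t1, O), t0• = slice(t0, P0) where P0 is the union of origin positions of elements of O, and t0• ≠ t1•). Then for every concretization t0' of t0•, there is a rewrite step t0' → t1' via r1 such that t1' is a concretization of t1•. -/

import Mathlib

open scoped Classical

abbrev Pos := List ℕ

/-- Ground terms over a signature `F` (variadic). -/
inductive GTerm (F : Type) : Type
  | fn : F → List (GTerm F) → GTerm F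

/-- Term slices: terms over `F ∪ {•}`. -/
inductive STerm (F : Type) : Type
  | bullet : STerm F
  | fn : F → List (STerm F) → STerm F

/-- Terms with variables over `F`. -/
inductive VTerm (F : Type) : Type
  | var : ℕ → VTerm F
  | fn : F → List (VTerm F) → VTerm F

variable {F : Type}

def GTerm.subtermAt : Pos → GTerm F → Option (GTerm F)
  | [], t => some t
  | i :: p, .fn _ args => (args[i]?).bind (GTerm.subtermAt p)

def GTerm.isPos (p : Pos) (t : GTerm F) : Prop := (GTerm.subtermAt p t).isSome

def GTerm.rootSym : GTerm F → F
  | .fn f _ => f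

def GTerm.rootSymAt (p : Pos) (t : GTerm F) : Option F :=
  (GTerm.subtermAt p t).map GTerm.rootSym

def STerm.subtermAt : Pos → STerm F → Option (STerm F)
  | [], t => some t
  | _ :: _, .bullet => none
  | i :: p, .fn _ args => (args[i]?).bind (STerm.subtermAt p)

def STerm.rootSym : STerm F → Option F
  | .bullet => none
  | .fn f _ => some f

def STerm.rootSymAt (p : Pos) (t : STerm F) : Option F :=
  (STerm.subtermAt p t).bind STerm.rootSym

/-- Non-`•` positions of a term slice. -/
def STerm.isPos (p : Pos) (t : STerm F) : Prop :=
  ∃ u, STerm.subtermAt p t = some u ∧ u ≠ .bullet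

def VTerm.subtermAt : Pos → VTerm F → Option (VTerm F)
  | [], t => some t
  | _ :: _, .var _ => none
  | i :: p, .fn _ args => (args[i]?).bind (VTerm.subtermAt p)

def VTerm.rootSym : VTerm F → Option F
  | .var _ => none
  | .fn f _ => some f

def VTerm.rootSymAt (p : Pos) (t : VTerm F) : Option F :=
  (VTerm.subtermAt p t).bind VTerm.rootSym

/-- Positions of the redex/contractum pattern: non-variable positions. -/
def VTerm.patPos (p : Pos) (t : VTerm F) : Prop :=
  ∃ f args, VTerm.subtermAt p t = some (.fn f args)

mutual
  def VTerm.subst (σ : ℕ → GTerm F) : VTerm F → GTerm F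
    | .var n => σ n
    | .fn f args => .fn f (VTerm.substList σ args)
  def VTerm.substList (σ : ℕ → GTerm F) : List (VTerm F) → List (GTerm F)
    | [] => []
    | a :: as => VTerm.subst σ a :: VTerm.substList σ as
end

mutual
  def GTerm.replaceAt : GTerm F → Pos → GTerm F → GTerm F
    | _, [], r => r
    | .fn f args, i :: p, r => .fn f (GTerm.replaceAtList args i p r)
  def GTerm.replaceAtList : List (GTerm F) → ℕ → Pos → GTerm F → List (GTerm F)
    | [], _, _, _ => []
    | a :: as, 0, p, r => GTerm.replaceAt a p r :: as
    | a :: as, n + 1, p, r => a :: GTerm.replaceAtList as n p r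
end

mutual
  def STerm.replaceAt : STerm F → Pos → STerm F → STerm F
    | _, [], r => r
    | .bullet, _ :: _, _ => .bullet
    | .fn f args, i :: p, r => .fn f (STerm.replaceAtList args i p r)
  def STerm.replaceAtList : List (STerm F) → ℕ → Pos → STerm F → List (STerm F)
    | [], _, _, _ => []
    | a :: as, 0, p, r => STerm.replaceAt a p r :: as
    | a :: as, n + 1, p, r => a :: STerm.replaceAtList as n p r
end

mutual
  noncomputable def GTerm.slRec (P : Set Pos) : GTerm F → Pos → STerm F
    | .fn f args, p =>
        if ∃ w, (p ++ w) ∈ P then .fn f (GTerm.slRecList P args p 0) else .bullet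
  noncomputable def GTerm.slRecList (P : Set Pos) : List (GTerm F) → Pos → ℕ → List (STerm F)
    | [], _, _ => []
    | a :: as, p, i => GTerm.slRec P a (p ++ [i]) :: GTerm.slRecList P as p (i + 1)
end

/-- `slice(t,P)`. -/
noncomputable def GTerm.slice (t : GTerm F) (P : Set Pos) : STerm F := GTerm.slRec P t []

/-- Concretization: `Conc t• t'` iff replacing the `•`s of `t•` by distinct fresh
variables yields a term more general than `t'`. -/
inductive Conc {F : Type} : STerm F → GTerm F → Prop
  | bullet (t : GTerm F) : Conc .bullet t
  | fn (f : F) (as : List (STerm F)) (bs : List (GTerm F))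
      (hlen : as.length = bs.length)
      (h : ∀ (i : ℕ) (a : STerm F) (b : GTerm F),
            as[i]? = some a → bs[i]? = some b → Conc a b) :
      Conc (.fn f as) (.fn f bs)

/-- Origin positions `◁_μ^L w` of a labeled rewrite step `t0 → t1`. -/
def originSet {α : Type} (t0 t1 : GTerm F) (Ls Lt : Pos → Set α) (w : Pos) : Set Pos :=
  {v | GTerm.isPos v t0 ∧ ∃ p, GTerm.isPos p t1 ∧ p <+: w ∧ Ls v ⊆ Lt p}

/-- A rewrite step with rule `lam → rho` at position `q`. -/
def RewritesAt (lam rho : VTerm F) (q : Pos) (t0 t1 : GTerm F) : Prop :=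
  ∃ σ : ℕ → GTerm F, GTerm.subtermAt q t0 = some (VTerm.subst σ lam) ∧
    t1 = GTerm.replaceAt t0 q (VTerm.subst σ rho)

def leftLinear (lam : VTerm F) : Prop :=
  ∀ n p p', VTerm.subtermAt p lam = some (.var n) →
    VTerm.subtermAt p' lam = some (.var n) → p = p'

def nonCollapsing (rho : VTerm F) : Prop := ∀ n, rho ≠ .var n
/-- The labeling of an (elementary) rewrite step `t0 = C[λσ] → C[ρσ] = t1` at hole
position `q`: every position of `t0` (context, redex pattern, substitution part) carries
a distinct fresh atomic label; context and substitution positions of `t1` carry the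
same labels as the corresponding positions of `t0`; every contractum-pattern symbol of
`t1` carries the union of all the redex-pattern labels. -/
structure ElemStepLabeling (F α : Type) (lam rho : VTerm F) (q : Pos) (σ : ℕ → GTerm F)
    (t0 t1 : GTerm F) (Ls Lt : Pos → Set α) : Prop where
  hsub : GTerm.subtermAt q t0 = some (VTerm.subst σ lam)
  hrepl : t1 = GTerm.replaceAt t0 q (VTerm.subst σ rho)
  atoms : ∀ v, GTerm.isPos v t0 → ∃ a, Ls v = {a}
  inj : ∀ v w, GTerm.isPos v t0 → GTerm.isPos w t0 → Ls v = Ls w → v = w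
  ctx_eq : ∀ v, ¬ q <+: v → Lt v = Ls v
  contr : ∀ u', VTerm.patPos u' rho →
      Lt (q ++ u') = ⋃ v' ∈ {p : Pos | VTerm.patPos p lam}, Ls (q ++ v')
  subst_eq : ∀ (u' : Pos) (n : ℕ) (v'' : Pos), VTerm.subtermAt u' rho = some (.var n) →
      ∀ v', VTerm.subtermAt v' lam = some (.var n) →
        Lt (q ++ u' ++ v'') = Ls (q ++ v' ++ v'')
section AuxSlicing
variable {F : Type}

theorem gsub_append (p r : Pos) (t : GTerm F) :
    GTerm.subtermAt (p ++ r) t = (GTerm.subtermAt p t).bind (GTerm.subtermAt r) := by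
  induction p generalizing t with
  | nil => simp [GTerm.subtermAt]
  | cons i p ih =>
    cases t with
    | fn f as =>
      simp only [List.cons_append, GTerm.subtermAt]
      cases as[i]? with
      | none => simp
      | some a => simp [ih]

theorem vsub_append (p r : Pos) (t : VTerm F) :
    VTerm.subtermAt (p ++ r) t = (VTerm.subtermAt p t).bind (VTerm.subtermAt r) := by
  induction p generalizing t with
  | nil => simp [VTerm.subtermAt]
  | cons i p ih =>
    cases t with
    | var n => simp [VTerm.subtermAt]
    | fn f as =>
      simp only [List.cons_append, VTerm.subtermAt]
      cases as[i]? with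
      | none => simp
      | some a => simp [ih]

theorem isPos_prefix {p o : Pos} {t : GTerm F} (h : p <+: o) (ho : GTerm.isPos o t) :
    GTerm.isPos p t := by
  obtain ⟨r, rfl⟩ := h
  unfold GTerm.isPos at *
  rw [gsub_append] at ho
  cases hp : GTerm.subtermAt p t with
  | none => rw [hp] at ho; simp at ho
  | some s => simp

theorem substList_getElem (σ : ℕ → GTerm F) (ls : List (VTerm F)) (i : ℕ) :
    (VTerm.substList σ ls)[i]? = (ls[i]?).map (VTerm.subst σ) := by
  induction ls generalizing i with
  | nil => simp [VTerm.substList]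
  | cons a as ih => cases i <;> simp [VTerm.substList, ih]

theorem substList_length (σ : ℕ → GTerm F) (ls : List (VTerm F)) :
    (VTerm.substList σ ls).length = ls.length := by
  induction ls with
  | nil => rfl
  | cons a as ih => simp [VTerm.substList, ih]

theorem subst_subtermAt (σ : ℕ → GTerm F) (v : Pos) (t s : VTerm F)
    (h : VTerm.subtermAt v t = some s) :
    GTerm.subtermAt v (VTerm.subst σ t) = some (VTerm.subst σ s) := by
  induction v generalizing t with
  | nil =>
    simp [VTerm.subtermAt] at h; subst h; simp [GTerm.subtermAt]
  | cons i p ih =>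
    cases t with
    | var n => simp [VTerm.subtermAt] at h
    | fn f ls =>
      simp only [VTerm.subtermAt] at h
      obtain ⟨a, ha, hs⟩ := Option.bind_eq_some_iff.mp h
      show GTerm.subtermAt (i :: p) (.fn f (VTerm.substList σ ls)) = _
      simp only [GTerm.subtermAt, substList_getElem, ha, Option.map_some, Option.bind_some]
      exact ih a hs

theorem replaceAtList_length (as : List (GTerm F)) (i : ℕ) (p : Pos) (r : GTerm F) :
    (GTerm.replaceAtList as i p r).length = as.length := by
  induction as generalizing i with
  | nil => rfl
  | cons a as ih => cases i <;> simp [GTerm.replaceAtList, ih]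

theorem replaceAtList_getElem (as : List (GTerm F)) (i : ℕ) (p : Pos) (r : GTerm F) (j : ℕ) :
    (GTerm.replaceAtList as i p r)[j]? =
      if j = i then (as[j]?).map (fun a => GTerm.replaceAt a p r) else as[j]? := by
  induction as generalizing i j with
  | nil => simp [GTerm.replaceAtList]
  | cons a as ih =>
    cases i with
    | zero =>
      cases j with
      | zero => simp [GTerm.replaceAtList]
      | succ j => simp [GTerm.replaceAtList]
    | succ i =>
      cases j with
      | zero => simp [GTerm.replaceAtList]
      | succ j =>
        simp only [GTerm.replaceAtList, List.getElem?_cons_succ, ih, Nat.succ_eq_add_one]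
        by_cases h : j = i <;> simp [h]

def GTerm.args : GTerm F → List (GTerm F)
  | .fn _ as => as

noncomputable def rootArity (p : Pos) (t : GTerm F) : Option (F × ℕ) :=
  (GTerm.subtermAt p t).map fun s => (s.rootSym, s.args.length)

theorem rootArity_eq_some {p : Pos} {t : GTerm F} {f : F} {k : ℕ} :
    rootArity p t = some (f, k) ↔
      ∃ as, GTerm.subtermAt p t = some (.fn f as) ∧ as.length = k := by
  cases h : GTerm.subtermAt p t with
  | none => simp [rootArity, h]
  | some s =>
    cases s with
    | fn g bs =>
      simp only [rootArity, h, Option.map_some, Option.some_inj]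
      constructor
      · rintro h'
        obtain ⟨h1, h2⟩ := Prod.mk.injEq _ _ _ _ ▸ h'
        exact ⟨bs, by simp_all [GTerm.rootSym, GTerm.args], by simp_all [GTerm.args]⟩
      · rintro ⟨as, h1, rfl⟩
        obtain ⟨rfl, rfl⟩ : g = f ∧ bs = as := by
          injection h1 with h3 h4; exact ⟨h3, h4⟩
        simp [GTerm.rootSym, GTerm.args]

theorem isPos_iff_rootArity (p : Pos) (t : GTerm F) :
    GTerm.isPos p t ↔ (rootArity p t).isSome := by
  simp [GTerm.isPos, rootArity]

theorem rootArity_replaceAt (q : Pos) (t r : GTerm F) (p : Pos) (h : ¬ q <+: p) :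
    rootArity p (GTerm.replaceAt t q r) = rootArity p t := by
  induction q generalizing p t with
  | nil => exact absurd List.nil_prefix h
  | cons i q ih =>
    cases t with
    | fn f as =>
      show rootArity p (.fn f (GTerm.replaceAtList as i q r)) = _
      cases p with
      | nil =>
        simp [rootArity, GTerm.subtermAt, GTerm.rootSym, GTerm.args, replaceAtList_length]
      | cons j p =>
        simp only [rootArity, GTerm.subtermAt, replaceAtList_getElem]
        rcases eq_or_ne j i with rfl | hj
        · rw [if_pos rfl]
          cases ha : as[j]? with
          | none => simp
          | some a =>
            simp only [Option.map_some, Option.bind_some]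
            have hq : ¬ q <+: p := by
              intro hp; exact h (by simpa [List.cons_prefix_cons] using hp)
            simpa [rootArity] using ih a p hq
        · rw [if_neg hj]

theorem subtermAt_replaceAt (q : Pos) (t r : GTerm F)
    (hq : (GTerm.subtermAt q t).isSome) (u : Pos) :
    GTerm.subtermAt (q ++ u) (GTerm.replaceAt t q r) = GTerm.subtermAt u r := by
  induction q generalizing t with
  | nil => simp [GTerm.replaceAt]
  | cons i q ih =>
    cases t with
    | fn f as =>
      simp only [GTerm.subtermAt] at hq
      cases ha : as[i]? with
      | none => rw [ha] at hq; simp at hq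
      | some a =>
        rw [ha] at hq; simp only [Option.bind_some] at hq
        show GTerm.subtermAt (i :: (q ++ u)) (.fn f (GTerm.replaceAtList as i q r)) = _
        simp only [GTerm.subtermAt, replaceAtList_getElem, if_pos rfl, ha,
          Option.map_some, Option.bind_some]
        exact ih a hq

theorem slRecList_length (P : Set Pos) (as : List (GTerm F)) (p : Pos) (k : ℕ) :
    (GTerm.slRecList P as p k).length = as.length := by
  induction as generalizing k with
  | nil => rfl
  | cons a as ih => simp [GTerm.slRecList, ih]

theorem slRecList_getElem (P : Set Pos) (as : List (GTerm F)) (p : Pos) (k i : ℕ) :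
    (GTerm.slRecList P as p k)[i]? = (as[i]?).map fun a => GTerm.slRec P a (p ++ [k + i]) := by
  induction as generalizing k i with
  | nil => simp [GTerm.slRecList]
  | cons a as ih =>
    cases i with
    | zero => simp [GTerm.slRecList]
    | succ i =>
      simp only [GTerm.slRecList, List.getElem?_cons_succ, ih (k + 1) i]
      have : k + (i + 1) = k + 1 + i := by omega
      rw [this]

theorem slice_subtermAt (P : Set Pos) (u : Pos) (t s : GTerm F) (p : Pos)
    (h : GTerm.subtermAt u t = some s) (hk : ∃ w, p ++ u ++ w ∈ P) :
    STerm.subtermAt u (GTerm.slRec P t p) = some (GTerm.slRec P s (p ++ u)) := by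
  induction u generalizing t p with
  | nil =>
    simp [GTerm.subtermAt] at h; subst h; simp [STerm.subtermAt]
  | cons i u ih =>
    cases t with
    | fn f as =>
      simp only [GTerm.subtermAt] at h
      obtain ⟨a, ha, hs⟩ := Option.bind_eq_some_iff.mp h
      have hkp : ∃ w, p ++ w ∈ P := by
        obtain ⟨w, hw⟩ := hk
        exact ⟨(i :: u) ++ w, by simpa [List.append_assoc] using hw⟩
      rw [GTerm.slRec, if_pos hkp]
      simp only [STerm.subtermAt, slRecList_getElem, ha, Option.map_some, Option.bind_some,
        Nat.zero_add]
      have hk' : ∃ w, (p ++ [i]) ++ u ++ w ∈ P := by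
        obtain ⟨w, hw⟩ := hk
        refine ⟨w, ?_⟩
        have : p ++ [i] ++ u ++ w = p ++ (i :: u) ++ w := by simp
        rwa [this]
      have := ih a (p ++ [i]) hs hk'
      rwa [show p ++ [i] ++ u = p ++ i :: u by simp] at this

theorem conc_subtermAt (u : Pos) (s : STerm F) (t' : GTerm F) (hc : Conc s t')
    (f : F) (as : List (STerm F)) (h : STerm.subtermAt u s = some (.fn f as)) :
    ∃ bs, GTerm.subtermAt u t' = some (.fn f bs) ∧ as.length = bs.length := by
  induction u generalizing s t' with
  | nil =>
    simp [STerm.subtermAt] at h; subst h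
    cases hc with
    | fn f as bs hlen hp => exact ⟨bs, rfl, hlen⟩
  | cons i u ih =>
    cases s with
    | bullet => simp [STerm.subtermAt] at h
    | fn g cs =>
      cases hc with
      | fn _ _ ds hlen hp =>
        simp only [STerm.subtermAt] at h
        obtain ⟨c, hc', hsub⟩ := Option.bind_eq_some_iff.mp h
        have hi : i < cs.length := (List.getElem?_eq_some_iff.mp hc').1
        have hd : ds[i]? = some ds[i] := List.getElem?_eq_getElem (by omega)
        have hcd := hp i c ds[i] hc' hd
        show (∃ bs, (ds[i]?).bind (GTerm.subtermAt u) = some (.fn f bs) ∧ _)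
        rw [hd, Option.bind_some]
        exact ih c ds[i] hcd hsub

theorem conc_slice (P : Set Pos) : ∀ (N : ℕ) (t : GTerm F) (p : Pos) (t' : GTerm F),
    sizeOf t ≤ N →
    (∀ (u : Pos) (f : F) (as : List (GTerm F)), (∃ w, p ++ u ++ w ∈ P) →
        GTerm.subtermAt u t = some (.fn f as) →
        ∃ bs, GTerm.subtermAt u t' = some (.fn f bs) ∧ as.length = bs.length) →
    Conc (GTerm.slRec P t p) t' := by
  intro N
  induction N with
  | zero =>
    intro t p t' hN H
    exfalso; cases t with
    | fn f as => simp at hN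
  | succ N ihN =>
    intro t p t' hN H
    cases t with
    | fn f as =>
      rw [GTerm.slRec]
      split
      case isFalse => exact Conc.bullet t'
      case isTrue hkk =>
        obtain ⟨bs, hbs, hlen⟩ := H [] f as (by simpa using hkk) (by simp [GTerm.subtermAt])
        have ht' : t' = .fn f bs := by simpa [GTerm.subtermAt] using hbs
        subst ht'
        refine Conc.fn f _ bs (by rw [slRecList_length]; exact hlen) ?_
        intro i a b hai hbi
        rw [slRecList_getElem] at hai
        obtain ⟨a₀, ha₀, rfl⟩ := Option.map_eq_some_iff.mp hai
        have hsz : sizeOf a₀ ≤ N := by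
          have h1 : sizeOf a₀ < sizeOf as := List.sizeOf_lt_of_mem (List.mem_of_getElem? ha₀)
          have h2 : sizeOf (GTerm.fn f as) = 1 + sizeOf f + sizeOf as := by simp
          omega
        simp only [Nat.zero_add]
        refine ihN a₀ (p ++ [i]) b hsz ?_
        intro u f' as' hk' hsub
        obtain ⟨bs', h1, h2⟩ := H (i :: u) f' as'
          (by obtain ⟨w, hw⟩ := hk'; exact ⟨w, by simpa [List.append_assoc] using hw⟩)
          (by simp [GTerm.subtermAt, ha₀]; exact hsub)
        refine ⟨bs', ?_, h2⟩
        simpa [GTerm.subtermAt, hbi] using h1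

theorem slice_ext (P P' : Set Pos) : ∀ (N : ℕ) (t t' : GTerm F) (p : Pos),
    sizeOf t ≤ N →
    (∀ u : Pos, (∃ w, p ++ u ++ w ∈ P) ↔ (∃ w, p ++ u ++ w ∈ P')) →
    (∀ (u : Pos) (f : F) (as : List (GTerm F)), (∃ w, p ++ u ++ w ∈ P) →
        GTerm.subtermAt u t = some (.fn f as) →
        ∃ bs, GTerm.subtermAt u t' = some (.fn f bs) ∧ as.length = bs.length) →
    GTerm.slRec P t p = GTerm.slRec P' t' p := by
  intro N
  induction N with
  | zero =>
    intro t t' p hN hiff H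
    exfalso; cases t with
    | fn f as => simp at hN
  | succ N ihN =>
    intro t t' p hN hiff H
    cases t with
    | fn f as =>
      by_cases hkk : ∃ w, p ++ w ∈ P
      · obtain ⟨bs, hbs, hlen⟩ := H [] f as (by simpa using hkk) (by simp [GTerm.subtermAt])
        have ht' : t' = .fn f bs := by simpa [GTerm.subtermAt] using hbs
        subst ht'
        have hkk' : ∃ w, p ++ w ∈ P' := by
          have := (hiff []).mp (by simpa using hkk); simpa using this
        rw [GTerm.slRec, if_pos hkk, GTerm.slRec, if_pos hkk']
        congr 1
        refine List.ext_getElem? fun i => ?_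
        rw [slRecList_getElem, slRecList_getElem]
        cases ha : as[i]? with
        | none =>
          have : bs[i]? = none := by
            rw [List.getElem?_eq_none_iff] at ha ⊢; omega
          simp [this]
        | some a₀ =>
          have hi : i < as.length := (List.getElem?_eq_some_iff.mp ha).1
          have hb : bs[i]? = some bs[i] := List.getElem?_eq_getElem (by omega)
          rw [hb]
          simp only [Option.map_some, Option.some_inj, Nat.zero_add]
          have hsz : sizeOf a₀ ≤ N := by
            have h1 : sizeOf a₀ < sizeOf as := List.sizeOf_lt_of_mem (List.mem_of_getElem? ha)
            have h2 : sizeOf (GTerm.fn f as) = 1 + sizeOf f + sizeOf as := by simp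
            omega
          refine ihN a₀ bs[i] (p ++ [i]) hsz ?_ ?_
          · intro u
            have h1 := hiff (i :: u)
            simpa [List.append_assoc] using h1
          · intro u f' as' hk' hsub
            obtain ⟨bs', h1, h2⟩ := H (i :: u) f' as'
              (by obtain ⟨w, hw⟩ := hk'; exact ⟨w, by simpa [List.append_assoc] using hw⟩)
              (by simp [GTerm.subtermAt, ha]; exact hsub)
            refine ⟨bs', ?_, h2⟩
            simpa [GTerm.subtermAt, hb] using h1
      · have hkk' : ¬ ∃ w, p ++ w ∈ P' := by
          intro h; exact hkk (by simpa using (hiff []).mpr (by simpa using h))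
        cases t' with
        | fn g bs => rw [GTerm.slRec, if_neg hkk, GTerm.slRec, if_neg hkk']

theorem subst_decomp (σ : ℕ → GTerm F) (u : Pos) (rho : VTerm F) (g : GTerm F)
    (h : GTerm.subtermAt u (VTerm.subst σ rho) = some g) :
    (∃ f ls, VTerm.subtermAt u rho = some (.fn f ls) ∧ g = VTerm.subst σ (.fn f ls)) ∨
    (∃ u' n v'', u = u' ++ v'' ∧ VTerm.subtermAt u' rho = some (.var n) ∧
       GTerm.subtermAt v'' (σ n) = some g) := by
  induction u generalizing rho with
  | nil =>
    cases rho with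
    | var n =>
      right
      exact ⟨[], n, [], rfl, by simp [VTerm.subtermAt], by simpa [VTerm.subst] using h⟩
    | fn f ls =>
      left
      refine ⟨f, ls, by simp [VTerm.subtermAt], ?_⟩
      have := h; simp [GTerm.subtermAt] at this; exact this.symm
  | cons i u ih =>
    cases rho with
    | var n =>
      right
      exact ⟨[], n, i :: u, rfl, by simp [VTerm.subtermAt], by simpa [VTerm.subst] using h⟩
    | fn f ls =>
      have h' : (VTerm.substList σ ls)[i]?.bind (GTerm.subtermAt u) = some g := by
        simpa [VTerm.subst, GTerm.subtermAt] using h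
      rw [substList_getElem] at h'
      cases hl : ls[i]? with
      | none => rw [hl] at h'; simp at h'
      | some l =>
        rw [hl] at h'; simp only [Option.map_some, Option.bind_some] at h'
        rcases ih l h' with ⟨f', ls', h1, h2⟩ | ⟨u', n, v'', h1, h2, h3⟩
        · left
          exact ⟨f', ls', by simp [VTerm.subtermAt, hl, h1], h2⟩
        · right
          exact ⟨i :: u', n, v'', by simp [h1], by simp [VTerm.subtermAt, hl, h2], h3⟩

end AuxSlicing

theorem one_step_slicing_sound {F α : Type} (lam rho : VTerm F) (q : Pos)
    (σ : ℕ → GTerm F) (t0 t1 : GTerm F) (Ls Lt : Pos → Set α)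
    (hL : ElemStepLabeling F α lam rho q σ t0 t1 Ls Lt)
    (hll : leftLinear lam) (hnc : nonCollapsing rho)
    (O : Set Pos) (hO : ∀ w ∈ O, GTerm.isPos w t1)
    (P0 : Set Pos) (hP0 : P0 = ⋃ w ∈ O, originSet t0 t1 Ls Lt w)
    (hne : GTerm.slice t0 P0 ≠ GTerm.slice t1 O) :
    ∀ t0' : GTerm F, Conc (GTerm.slice t0 P0) t0' →
      ∃ t1' : GTerm F, RewritesAt lam rho q t0' t1' ∧ Conc (GTerm.slice t1 O) t1' := by
  obtain ⟨hsub, hrepl, atoms, inj, ctx_eq, contr, subst_eq⟩ := hL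
  intro t0' hconc
  have hconc' : Conc (GTerm.slRec P0 t0 []) t0' := hconc
  have hq0 : (GTerm.subtermAt q t0).isSome := by rw [hsub]; rfl
  have KRA : ∀ (p : Pos) (f : F) (as : List (GTerm F)), p ∈ P0 →
      GTerm.subtermAt p t0 = some (.fn f as) →
      ∃ bs, GTerm.subtermAt p t0' = some (.fn f bs) ∧ as.length = bs.length := by
    intro p f as hp hs
    have hkp : ∃ w, [] ++ p ++ w ∈ P0 := ⟨[], by simpa using hp⟩
    have h1 := slice_subtermAt P0 p t0 (.fn f as) [] hs hkp
    rw [List.nil_append] at h1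
    rw [GTerm.slRec, if_pos (⟨[], by simpa using hp⟩ : ∃ w, p ++ w ∈ P0)] at h1
    obtain ⟨bs, hbs, hlen⟩ := conc_subtermAt p _ t0' hconc' f _ h1
    exact ⟨bs, hbs, by rw [← hlen, slRecList_length]⟩
  have hrt : ∀ p : Pos, ¬ q <+: p → rootArity p t1 = rootArity p t0 := fun p h => by
    rw [hrepl]; exact rootArity_replaceAt q t0 _ p h
  have memP0 : ∀ (v p' o : Pos), o ∈ O → GTerm.isPos v t0 → GTerm.isPos p' t1 → p' <+: o →
      Ls v ⊆ Lt p' → v ∈ P0 := by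
    intro v p' o hoO hv hp' hpo hsub'
    rw [hP0]
    exact Set.mem_biUnion hoO ⟨hv, p', hp', hpo, hsub'⟩
  by_cases hmain : ∃ o ∈ O, q <+: o
  · -- main case
    obtain ⟨o₀, ho₀O, ho₀q⟩ := hmain
    have hq1 : GTerm.subtermAt q t1 = some (VTerm.subst σ rho) := by
      rw [hrepl]
      have := subtermAt_replaceAt q t0 (VTerm.subst σ rho) hq0 []
      simpa [GTerm.subtermAt] using this
    have hrpat : VTerm.patPos [] rho := by
      cases hr : rho with
      | var n => exact absurd hr (hnc n)
      | fn g rs => exact ⟨g, rs, by simp [VTerm.subtermAt]⟩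
    have hq1pos : GTerm.isPos q t1 := by rw [GTerm.isPos, hq1]; rfl
    have hLtq : Lt q = ⋃ v' ∈ {p : Pos | VTerm.patPos p lam}, Ls (q ++ v') := by
      have := contr [] hrpat; simpa using this
    have PATIN : ∀ (v' : Pos) (f : F) (ls : List (VTerm F)),
        VTerm.subtermAt v' lam = some (.fn f ls) → q ++ v' ∈ P0 := by
      intro v' f ls hv'
      have hpos : GTerm.isPos (q ++ v') t0 := by
        rw [GTerm.isPos, gsub_append, hsub, Option.bind_some,
          subst_subtermAt σ v' lam _ hv']; rfl
      refine memP0 _ q o₀ ho₀O hpos hq1pos ho₀q ?_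
      rw [hLtq]
      exact Set.subset_biUnion_of_mem (u := fun v'' => Ls (q ++ v''))
        (show v' ∈ {p : Pos | VTerm.patPos p lam} from ⟨f, ls, hv'⟩)
    have PAT0 : ∀ (v' : Pos) (f : F) (ls : List (VTerm F)),
        VTerm.subtermAt v' lam = some (.fn f ls) →
        GTerm.subtermAt (q ++ v') t0 = some (.fn f (VTerm.substList σ ls)) := by
      intro v' f ls hv'
      rw [gsub_append, hsub, Option.bind_some, subst_subtermAt σ v' lam _ hv']
      rfl
    have QPOS : (GTerm.subtermAt q t0').isSome := by
      rcases List.eq_nil_or_concat q with hq | ⟨q'', j, hq⟩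
      · subst hq; simp [GTerm.subtermAt]
      · rw [List.concat_eq_append] at hq
        subst hq
        have hq''0 : GTerm.isPos q'' t0 := isPos_prefix ⟨[j], rfl⟩ hq0
        have hnq'' : ¬ (q'' ++ [j]) <+: q'' := by
          intro h; have := h.length_le; simp at this
        have hq''1 : GTerm.isPos q'' t1 := by
          rw [isPos_iff_rootArity, hrt q'' hnq'', ← isPos_iff_rootArity]; exact hq''0
        have hmem : q'' ∈ P0 :=
          memP0 q'' q'' (q'' ++ [j] ++ (o₀.drop (q'' ++ [j]).length)) (by
              obtain ⟨r, hr⟩ := ho₀q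
              rw [← hr]; simpa [← hr] using ho₀O)
            hq''0 hq''1 (⟨[j] ++ (o₀.drop (q'' ++ [j]).length), by simp⟩)
            (by rw [ctx_eq q'' hnq''])
        obtain ⟨s, hs⟩ := Option.isSome_iff_exists.mp hq''0
        cases s with
        | fn f cs =>
          have hj : ∃ c, cs[j]? = some c := by
            have h2 := hq0
            rw [gsub_append, hs, Option.bind_some] at h2
            simp only [GTerm.subtermAt] at h2
            cases hc : cs[j]? with
            | none => rw [hc] at h2; simp at h2
            | some c => exact ⟨c, rfl⟩
          obtain ⟨c, hc⟩ := hj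
          obtain ⟨bs, hbs, hlen⟩ := KRA q'' f cs hmem hs
          have hjlen : j < bs.length := by
            have := (List.getElem?_eq_some_iff.mp hc).1; omega
          rw [gsub_append, hbs, Option.bind_some]
          simp [GTerm.subtermAt, List.getElem?_eq_getElem hjlen]
    have POSVAR : ∀ (v' : Pos) (n : ℕ), VTerm.subtermAt v' lam = some (.var n) →
        (GTerm.subtermAt (q ++ v') t0').isSome := by
      intro v' n hv'
      rcases List.eq_nil_or_concat v' with h | ⟨v'', j, h⟩
      · subst h; simpa using QPOS
      · rw [List.concat_eq_append] at h; subst h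
        rw [vsub_append] at hv'
        obtain ⟨s, hs, hjs⟩ := Option.bind_eq_some_iff.mp hv'
        cases s with
        | var m => simp [VTerm.subtermAt] at hjs
        | fn f ls =>
          have hls : ls[j]? = some (.var n) := by
            have : (ls[j]?).bind (VTerm.subtermAt []) = some (VTerm.var n) := by
              simpa [VTerm.subtermAt] using hjs
            cases hl : ls[j]? with
            | none => rw [hl] at this; simp at this
            | some l =>
              rw [hl] at this; simp [VTerm.subtermAt] at this
              rw [this]
          obtain ⟨bs, hbs, hlen⟩ := KRA (q ++ v'') f (VTerm.substList σ ls)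
            (PATIN v'' f ls hs) (PAT0 v'' f ls hs)
          have hjlen : j < bs.length := by
            have h1 := (List.getElem?_eq_some_iff.mp hls).1
            have h2 := substList_length σ ls
            omega
          rw [show q ++ (v'' ++ [j]) = (q ++ v'') ++ [j] by simp, gsub_append, hbs,
            Option.bind_some]
          simp [GTerm.subtermAt, List.getElem?_eq_getElem hjlen]
    obtain ⟨σ', hσ'⟩ : ∃ σ' : ℕ → GTerm F, ∀ n,
        σ' n = if h : ∃ v', VTerm.subtermAt v' lam = some (VTerm.var n)
          then (GTerm.subtermAt (q ++ h.choose) t0').getD (σ n) else σ n :=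
      ⟨_, fun _ => rfl⟩
    have VARPROP : ∀ (n : ℕ) (v' : Pos), VTerm.subtermAt v' lam = some (.var n) →
        GTerm.subtermAt (q ++ v') t0' = some (σ' n) := by
      intro n v' hv
      have hex : ∃ v'', VTerm.subtermAt v'' lam = some (VTerm.var n) := ⟨v', hv⟩
      have hch : hex.choose = v' := hll n hex.choose v' hex.choose_spec hv
      obtain ⟨t'', ht''⟩ := Option.isSome_iff_exists.mp (POSVAR v' n hv)
      rw [hσ' n, dif_pos hex, hch, ht'']
      simp
    have MATCH : ∀ (N : ℕ) (s : VTerm F), sizeOf s ≤ N → ∀ v' : Pos,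
        VTerm.subtermAt v' lam = some s →
        GTerm.subtermAt (q ++ v') t0' = some (VTerm.subst σ' s) := by
      intro N
      induction N with
      | zero =>
        intro s hs v' hv'
        exfalso
        cases s with
        | var n => simp at hs
        | fn f ls => simp at hs
      | succ N ihN =>
        intro s hs v' hv'
        cases s with
        | var n => simpa [VTerm.subst] using VARPROP n v' hv'
        | fn f ls =>
          obtain ⟨bs, hbs, hlen⟩ := KRA (q ++ v') f (VTerm.substList σ ls)
            (PATIN v' f ls hv') (PAT0 v' f ls hv')
          have hbseq : bs = VTerm.substList σ' ls := by
            refine List.ext_getElem? fun i => ?_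
            rw [substList_getElem]
            cases hl : ls[i]? with
            | none =>
              have h2 := substList_length σ ls
              rw [List.getElem?_eq_none_iff] at hl
              have : bs[i]? = none := by rw [List.getElem?_eq_none_iff]; omega
              simp [this]
            | some l =>
              have hi : i < ls.length := (List.getElem?_eq_some_iff.mp hl).1
              have hbl : i < bs.length := by
                have h2 := substList_length σ ls; omega
              have hbi : bs[i]? = some bs[i] := List.getElem?_eq_getElem hbl
              rw [hbi]
              simp only [Option.map_some, Option.some_inj]
              have hsz : sizeOf l ≤ N := by
                have h1 : sizeOf l < sizeOf ls := List.sizeOf_lt_of_mem (List.mem_of_getElem? hl)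
                have h2 : sizeOf (VTerm.fn f ls) = 1 + sizeOf f + sizeOf ls := by simp
                omega
              have hlv : VTerm.subtermAt (v' ++ [i]) lam = some l := by
                rw [vsub_append, hv', Option.bind_some]
                simp [VTerm.subtermAt, hl]
              have hstep := ihN l hsz (v' ++ [i]) hlv
              rw [show q ++ (v' ++ [i]) = (q ++ v') ++ [i] by simp, gsub_append, hbs,
                Option.bind_some] at hstep
              simp only [GTerm.subtermAt, hbi, Option.bind_some] at hstep
              simpa using hstep
          rw [hbseq] at hbs
          simpa [VTerm.subst] using hbs
    have hmatch : GTerm.subtermAt q t0' = some (VTerm.subst σ' lam) := by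
      have := MATCH (sizeOf lam) lam le_rfl [] (by simp [VTerm.subtermAt])
      simpa using this
    have hq0' : (GTerm.subtermAt q t0').isSome := by rw [hmatch]; rfl
    refine ⟨GTerm.replaceAt t0' q (VTerm.subst σ' rho), ⟨σ', hmatch, rfl⟩, ?_⟩
    show Conc (GTerm.slRec O t1 []) _
    refine conc_slice O (sizeOf t1) t1 [] _ le_rfl ?_
    intro u f args hkO hsub1
    simp only [List.nil_append] at hkO
    have ht1'at : ∀ u₂ : Pos,
        GTerm.subtermAt (q ++ u₂) (GTerm.replaceAt t0' q (VTerm.subst σ' rho)) =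
          GTerm.subtermAt u₂ (VTerm.subst σ' rho) :=
      fun u₂ => subtermAt_replaceAt q t0' _ hq0' u₂
    by_cases hqu : q <+: u
    · obtain ⟨u₁, rfl⟩ := hqu
      have hsub1' : GTerm.subtermAt u₁ (VTerm.subst σ rho) = some (.fn f args) := by
        have h3 := hsub1
        rw [hrepl, subtermAt_replaceAt q t0 _ hq0 u₁] at h3; exact h3
      rcases subst_decomp σ u₁ rho _ hsub1' with ⟨f', ls, hpat, hg⟩ | ⟨u', n, v'', hu, hvar, hsg⟩
      · have hfe : f' = f ∧ args = VTerm.substList σ ls := by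
          have h4 : GTerm.fn f args = GTerm.fn f' (VTerm.substList σ ls) := by
            simpa [VTerm.subst] using hg
          injection h4 with h1 h2; exact ⟨h1.symm, h2⟩
        obtain ⟨rfl, hargs⟩ := hfe
        refine ⟨VTerm.substList σ' ls, ?_, ?_⟩
        · rw [ht1'at u₁, subst_subtermAt σ' u₁ rho _ hpat]
          rfl
        · rw [hargs, substList_length, substList_length]
      · subst hu
        have hval : GTerm.subtermAt (u' ++ v'') (VTerm.subst σ' rho) =
            GTerm.subtermAt v'' (σ' n) := by
          rw [gsub_append, subst_subtermAt σ' u' rho _ hvar]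
          simp [VTerm.subst]
        by_cases hv : ∃ v₁', VTerm.subtermAt v₁' lam = some (VTerm.var n)
        · obtain ⟨v₁', hv₁⟩ := hv
          have hσ'n : GTerm.subtermAt (q ++ v₁') t0' = some (σ' n) := VARPROP n v₁' hv₁
          have hσn : GTerm.subtermAt (q ++ v₁') t0 = some (σ n) := by
            rw [gsub_append, hsub, Option.bind_some, subst_subtermAt σ v₁' lam _ hv₁]
            simp [VTerm.subst]
          have hv0 : GTerm.subtermAt (q ++ v₁' ++ v'') t0 = some (.fn f args) := by
            rw [gsub_append, hσn, Option.bind_some]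
            exact hsg
          have hmem : q ++ v₁' ++ v'' ∈ P0 := by
            obtain ⟨w, hw⟩ := hkO
            refine memP0 _ (q ++ (u' ++ v'')) (q ++ (u' ++ v'') ++ w) hw ?_ ?_ ⟨w, rfl⟩ ?_
            · rw [GTerm.isPos, hv0]; rfl
            · rw [GTerm.isPos, hsub1]; rfl
            · have hse := subst_eq u' n v'' hvar v₁' hv₁
              have heq : Lt (q ++ (u' ++ v'')) = Ls (q ++ v₁' ++ v'') := by
                rw [← hse]; simp
              rw [heq]
          obtain ⟨bs, hbs, hlen⟩ := KRA _ f args hmem hv0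
          refine ⟨bs, ?_, hlen⟩
          rw [ht1'at (u' ++ v''), hval]
          have h5 : GTerm.subtermAt ((q ++ v₁') ++ v'') t0' = GTerm.subtermAt v'' (σ' n) := by
            rw [gsub_append, hσ'n, Option.bind_some]
          rw [← h5]
          exact hbs
        · have hσ'σ : σ' n = σ n := by rw [hσ' n, dif_neg hv]
          exact ⟨args, by rw [ht1'at (u' ++ v''), hval, hσ'σ]; exact hsg, rfl⟩
    · have hr1 : rootArity u t1 = some (f, args.length) := rootArity_eq_some.mpr ⟨args, hsub1, rfl⟩
      rw [hrt u hqu] at hr1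
      obtain ⟨as₀, has₀, hlen₀⟩ := rootArity_eq_some.mp hr1
      have hupos0 : GTerm.isPos u t0 := by rw [GTerm.isPos, has₀]; rfl
      have humem : u ∈ P0 := by
        obtain ⟨w, hw⟩ := hkO
        refine memP0 u u (u ++ w) hw hupos0 ?_ ⟨w, rfl⟩ (by rw [ctx_eq u hqu])
        rw [GTerm.isPos, hsub1]; rfl
      obtain ⟨bs, hbs, hlen⟩ := KRA u f as₀ humem has₀
      have h2 : rootArity u (GTerm.replaceAt t0' q (VTerm.subst σ' rho)) = some (f, bs.length) := by
        rw [rootArity_replaceAt q t0' _ u hqu]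
        exact rootArity_eq_some.mpr ⟨bs, hbs, rfl⟩
      obtain ⟨bs', hbs', hlen'⟩ := rootArity_eq_some.mp h2
      exact ⟨bs', hbs', by omega⟩
  · -- degenerate case: slices are equal, contradiction
    exfalso
    push_neg at hmain
    have hnq : ∀ o ∈ O, ¬ q <+: o := hmain
    have hO0 : ∀ o ∈ O, GTerm.isPos o t0 := by
      intro o hoO
      rw [isPos_iff_rootArity, ← hrt o (hnq o hoO), ← isPos_iff_rootArity]
      exact hO o hoO
    have hiff : ∀ u : Pos, (∃ w, u ++ w ∈ P0) ↔ (∃ w, u ++ w ∈ O) := by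
      intro u
      constructor
      · rintro ⟨w, hw⟩
        rw [hP0] at hw
        obtain ⟨o, hoO, hv, p', hp'1, hp'o, hLs⟩ := Set.mem_iUnion₂.mp hw
        have hqp' : ¬ q <+: p' := fun h => hnq o hoO (h.trans hp'o)
        have hp'0 : GTerm.isPos p' t0 := by
          rw [isPos_iff_rootArity, ← hrt p' hqp', ← isPos_iff_rootArity]; exact hp'1
        obtain ⟨a, ha⟩ := atoms _ hv
        obtain ⟨b, hb⟩ := atoms _ hp'0
        have hab : Ls (u ++ w) = Ls p' := by
          rw [ctx_eq p' hqp'] at hLs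
          rw [ha, hb] at hLs
          rw [ha, hb, hLs rfl]
        have hvp := inj _ _ hv hp'0 hab
        obtain ⟨w₂, rfl⟩ := hp'o
        exact ⟨w ++ w₂, by rw [← List.append_assoc, hvp]; exact hoO⟩
      · rintro ⟨w, hw⟩
        refine ⟨w, ?_⟩
        rw [hP0]
        have h1 : GTerm.isPos (u ++ w) t1 := hO _ hw
        refine Set.mem_biUnion hw ⟨hO0 _ hw, u ++ w, h1, List.prefix_refl _, ?_⟩
        rw [ctx_eq _ (hnq _ hw)]
    refine hne (slice_ext P0 O (sizeOf t0) t0 t1 [] le_rfl (fun u => by simpa using hiff u) ?_)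
    intro u f as hk hsu
    simp only [List.nil_append] at hk
    have hnqu : ¬ q <+: u := by
      intro h
      obtain ⟨w, hw⟩ := (hiff u).mp hk
      exact hnq _ hw (h.trans ⟨w, rfl⟩)
    have h1 : rootArity u t1 = some (f, as.length) := by
      rw [hrt u hnqu]; exact rootArity_eq_some.mpr ⟨as, hsu, rfl⟩
    obtain ⟨bs, hbs, hlen⟩ := rootArity_eq_some.mp h1
    exact ⟨bs, hbs, hlen.symm⟩
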